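/- Let f be a smooth real function and let u(t,x) be a smooth real-valued solution of the gKN equation with f, such that u_x(t,x) ≠ 0 for all (t,x). Define the conserved density T₁(t,x) = (1/2)·u_xx²/u_x² + (1/3)·f(u)/u_x² and flux X₁(t,x) = −u_xxxx·u_xx/u_x² + (1/2)·u_xxx²/u_x² + (2/3)·u_xxx·(3u_xx² + f(u))/u_x³ − (9/8)·u_xx⁴/u_x⁴ + (1/2)·u_xx²·f(u)/u_x⁴ − u_xx·f'(u)/u_x² + (1/6)·f(u)²/u_x⁴. Assume that for every t: the function x ↦ T₁(t,x) is integrable on ℝ; the map E₁(t) := ∫_ℝ T₁(t,x) dx is differentiable with E₁'(t) = ∫_ℝ ∂_t T₁(t,x) dx; the function x ↦ ∂_x X₁(t,x) is integrable on ℝ; and X₁(t,x) → 0 as x → +∞ and as x → −∞. Then E₁'(t) = 0 for every t, i.e., the Hamiltonian energy E₁ = ∫_ℝ T₁ dx is a constant of the motion. -/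

import Mathlib

open Real

/-- Partial derivative with respect to the second (spatial) variable. -/
noncomputable def pdx (u : ℝ → ℝ → ℝ) : ℝ → ℝ → ℝ := fun t x => deriv (fun y => u t y) x

/-- Partial derivative with respect to the first (time) variable. -/
noncomputable def pdt (u : ℝ → ℝ → ℝ) : ℝ → ℝ → ℝ := fun t x => deriv (fun s => u s x) t

/-- `u` solves the generalized Krichever-Novikov equation with nonlinearity `f`:
`u_t = u_xxx - (3/2) u_xx^2/u_x + f(u)/u_x`. -/
def isGKN (f : ℝ → ℝ) (u : ℝ → ℝ → ℝ) : Prop :=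
  ∀ t x, pdt u t x =
    pdx (pdx (pdx u)) t x - (3/2) * (pdx (pdx u) t x)^2 / pdx u t x + f (u t x) / pdx u t x

/-- The conserved density `T₁ = (1/2) u_xx²/u_x² + (1/3) f(u)/u_x²`. -/
noncomputable def T1 (f : ℝ → ℝ) (u : ℝ → ℝ → ℝ) : ℝ → ℝ → ℝ := fun t x =>
  (1/2) * (pdx (pdx u) t x)^2 / (pdx u t x)^2 + (1/3) * f (u t x) / (pdx u t x)^2

/-- The flux `X₁` corresponding to `T₁`. -/
noncomputable def X1 (f : ℝ → ℝ) (u : ℝ → ℝ → ℝ) : ℝ → ℝ → ℝ := fun t x =>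
  -((pdx (pdx (pdx (pdx u))) t x) * (pdx (pdx u) t x) / (pdx u t x)^2) + (1/2) * (pdx (pdx (pdx u)) t x)^2 / (pdx u t x)^2
    + (2/3) * (pdx (pdx (pdx u)) t x) * (3 * (pdx (pdx u) t x)^2 + f (u t x)) / (pdx u t x)^3
    - (9/8) * (pdx (pdx u) t x)^4 / (pdx u t x)^4 + (1/2) * (pdx (pdx u) t x)^2 * (f (u t x)) / (pdx u t x)^4
    - (pdx (pdx u) t x) * (deriv f (u t x)) / (pdx u t x)^2 + (1/6) * (f (u t x))^2 / (pdx u t x)^4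

open MeasureTheory Filter

/-! Differentiating `T₁` in time and eliminating `u_t`, `u_xt`, `u_xxt` through the equation and its
first two `x`-derivatives (mixed partials commute) turns `∂ₜT₁ + ∂ₓX₁` into a rational expression
in `u_x, …, u_xxxxx, f(u), f'(u), f''(u)` that vanishes identically. Integrating over `ℝ`, the
fundamental theorem of calculus on the whole line and the decay of `X₁` give `∫ ∂ₓX₁ = 0`, hence
`E₁' = ∫ ∂ₜT₁ = 0`. -/

open Function
open scoped ContDiff

section Slices

variable {F : Type*} [NormedAddCommGroup F] [NormedSpace ℝ F] {G : ℝ × ℝ → F} {t x : ℝ}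

theorem DifferentiableAt.hasDerivAt_slice_fst (hG : DifferentiableAt ℝ G (t, x)) :
    HasDerivAt (fun s => G (s, x)) (fderiv ℝ G (t, x) (1, 0)) t :=
  hG.hasFDerivAt.comp_hasDerivAt t ((hasDerivAt_id t).prodMk (hasDerivAt_const t x))

theorem DifferentiableAt.hasDerivAt_slice_snd (hG : DifferentiableAt ℝ G (t, x)) :
    HasDerivAt (fun y => G (t, y)) (fderiv ℝ G (t, x) (0, 1)) x :=
  hG.hasFDerivAt.comp_hasDerivAt x ((hasDerivAt_const x t).prodMk (hasDerivAt_id x))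

end Slices

section PartialDerivatives

variable {w : ℝ → ℝ → ℝ} {t x : ℝ}

theorem pdx_eq_fderiv (hw : DifferentiableAt ℝ (uncurry w) (t, x)) :
    pdx w t x = fderiv ℝ (uncurry w) (t, x) (0, 1) :=
  hw.hasDerivAt_slice_snd.deriv

theorem pdt_eq_fderiv (hw : DifferentiableAt ℝ (uncurry w) (t, x)) :
    pdt w t x = fderiv ℝ (uncurry w) (t, x) (1, 0) :=
  hw.hasDerivAt_slice_fst.deriv

theorem hasDerivAt_pdx (hw : DifferentiableAt ℝ (uncurry w) (t, x)) :
    HasDerivAt (fun y => w t y) (pdx w t x) x :=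
  hw.hasDerivAt_slice_snd.congr_deriv (pdx_eq_fderiv hw).symm

theorem hasDerivAt_pdt (hw : DifferentiableAt ℝ (uncurry w) (t, x)) :
    HasDerivAt (fun s => w s x) (pdt w t x) t :=
  hw.hasDerivAt_slice_fst.congr_deriv (pdt_eq_fderiv hw).symm

theorem ContDiff.uncurry_pdx {m n : WithTop ℕ∞} (hw : ContDiff ℝ n (uncurry w))
    (hmn : m + 1 ≤ n) : ContDiff ℝ m (uncurry (pdx w)) := by
  have hd : Differentiable ℝ (uncurry w) :=
    hw.differentiable (ne_of_gt (lt_of_lt_of_le (by positivity) hmn))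
  convert (hw.fderiv_right hmn).clm_apply (contDiff_const (c := ((0 : ℝ), (1 : ℝ)))) using 1
  ext p
  exact pdx_eq_fderiv (hd p)

theorem pdt_pdx_comm (hw : ContDiff ℝ 2 (uncurry w)) (t x : ℝ) :
    pdt (pdx w) t x = pdx (pdt w) t x := by
  have hd : Differentiable ℝ (uncurry w) := hw.differentiable (by simp)
  have hd2 : Differentiable ℝ (fderiv ℝ (uncurry w)) :=
    (hw.fderiv_right (m := 1) le_rfl).differentiable (by simp)
  have hxt : pdt (pdx w) t x = fderiv ℝ (fderiv ℝ (uncurry w)) (t, x) (1, 0) (0, 1) := by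
    have hslice :=
      (hd2 (t, x)).hasDerivAt_slice_fst.clm_apply (hasDerivAt_const t ((0 : ℝ), (1 : ℝ)))
    rw [map_zero, add_zero] at hslice
    rw [← hslice.deriv]
    exact congrArg (deriv · t) (funext fun s => pdx_eq_fderiv (hd (s, x)))
  have htx : pdx (pdt w) t x = fderiv ℝ (fderiv ℝ (uncurry w)) (t, x) (0, 1) (1, 0) := by
    have hslice :=
      (hd2 (t, x)).hasDerivAt_slice_snd.clm_apply (hasDerivAt_const x ((1 : ℝ), (0 : ℝ)))
    rw [map_zero, add_zero] at hslice
    rw [← hslice.deriv]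
    exact congrArg (deriv · x) (funext fun y => pdt_eq_fderiv (hd (t, y)))
  rw [hxt, htx, hw.contDiffAt.isSymmSndFDerivAt (by simp)]

end PartialDerivatives

section GKN

variable {f : ℝ → ℝ} {u : ℝ → ℝ → ℝ} {t x : ℝ}

theorem pdt_T1_eq (hf : DifferentiableAt ℝ f (u t x)) (hu : ContDiff ℝ ∞ (uncurry u))
    (hux : pdx u t x ≠ 0) :
    pdt (T1 f u) t x = pdx (pdx u) t x * pdt (pdx (pdx u)) t x / pdx u t x ^ 2
      - pdx (pdx u) t x ^ 2 * pdt (pdx u) t x / pdx u t x ^ 3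
      + (1/3) * deriv f (u t x) * pdt u t x / pdx u t x ^ 2
      - (2/3) * f (u t x) * pdt (pdx u) t x / pdx u t x ^ 3 := by
  have hu1 : ContDiff ℝ ∞ (uncurry (pdx u)) := hu.uncurry_pdx (by simp)
  have hu2 : ContDiff ℝ ∞ (uncurry (pdx (pdx u))) := hu1.uncurry_pdx (by simp)
  have e0 := hasDerivAt_pdt (hu.differentiable (by simp) (t, x))
  have e1 := hasDerivAt_pdt (hu1.differentiable (by simp) (t, x))
  have e2 := hasDerivAt_pdt (hu2.differentiable (by simp) (t, x))
  have hT : HasDerivAt (fun s => T1 f u s x) _ t :=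
    (((e2.pow 2).const_mul (1/2 : ℝ)).div (e1.pow 2) (pow_ne_zero 2 hux)).add
      (((hf.hasDerivAt.comp t e0).const_mul (1/3 : ℝ)).div (e1.pow 2) (pow_ne_zero 2 hux))
  refine hT.deriv.trans ?_
  simp only [Pi.pow_apply, comp_apply]
  field_simp
  ring

theorem isGKN.pdt_pdx_eq (hsol : isGKN f u) (hf : DifferentiableAt ℝ f (u t x))
    (hu : ContDiff ℝ ∞ (uncurry u)) (hux : pdx u t x ≠ 0) :
    pdt (pdx u) t x = pdx (pdx (pdx (pdx u))) t x
      - 3 * pdx (pdx u) t x * pdx (pdx (pdx u)) t x / pdx u t x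
      + (3/2) * pdx (pdx u) t x ^ 3 / pdx u t x ^ 2
      + deriv f (u t x) - f (u t x) * pdx (pdx u) t x / pdx u t x ^ 2 := by
  have hu1 : ContDiff ℝ ∞ (uncurry (pdx u)) := hu.uncurry_pdx (by simp)
  have hu2 : ContDiff ℝ ∞ (uncurry (pdx (pdx u))) := hu1.uncurry_pdx (by simp)
  have hu3 : ContDiff ℝ ∞ (uncurry (pdx (pdx (pdx u)))) := hu2.uncurry_pdx (by simp)
  have d0 := hasDerivAt_pdx (hu.differentiable (by simp) (t, x))
  have d1 := hasDerivAt_pdx (hu1.differentiable (by simp) (t, x))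
  have d2 := hasDerivAt_pdx (hu2.differentiable (by simp) (t, x))
  have d3 := hasDerivAt_pdx (hu3.differentiable (by simp) (t, x))
  have hrhs := (d3.sub (((d2.pow 2).const_mul (3/2 : ℝ)).div d1 hux)).add
    ((hf.hasDerivAt.comp x d0).div d1 hux)
  rw [pdt_pdx_comm (contDiff_infty.1 hu 2), pdx,
    show (fun y => pdt u t y) = _ from funext (hsol t)]
  refine hrhs.deriv.trans ?_
  simp only [Pi.pow_apply, comp_apply]
  field_simp
  ring

theorem differentiable_X1 (hf : ContDiff ℝ 2 f) (hu : ContDiff ℝ ∞ (uncurry u))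
    (hux : ∀ y, pdx u t y ≠ 0) : Differentiable ℝ (X1 f u t) := by
  have slice {w : ℝ → ℝ → ℝ} (hw : ContDiff ℝ ∞ (uncurry w)) : Differentiable ℝ (w t) :=
    fun y => (hasDerivAt_pdx (hw.differentiable (by simp) (t, y))).differentiableAt
  have hu1 : ContDiff ℝ ∞ (uncurry (pdx u)) := hu.uncurry_pdx (by simp)
  have hu2 : ContDiff ℝ ∞ (uncurry (pdx (pdx u))) := hu1.uncurry_pdx (by simp)
  have hu3 : ContDiff ℝ ∞ (uncurry (pdx (pdx (pdx u)))) := hu2.uncurry_pdx (by simp)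
  have hu4 : ContDiff ℝ ∞ (uncurry (pdx (pdx (pdx (pdx u))))) := hu3.uncurry_pdx (by simp)
  have d0 := slice hu
  have d1 := slice hu1
  have d2 := slice hu2
  have d3 := slice hu3
  have d4 := slice hu4
  have df := hf.differentiable (by simp)
  have df' := hf.differentiable_deriv_two
  intro x
  unfold X1
  fun_prop (disch := simp [hux x])

theorem isGKN.pdt_T1_eq_neg_pdx_X1 (hsol : isGKN f u) (hf : ContDiff ℝ 2 f)
    (hu : ContDiff ℝ ∞ (uncurry u)) (hux : ∀ y, pdx u t y ≠ 0) :
    pdt (T1 f u) t x = -pdx (X1 f u) t x := by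
  have hne := hux x
  have hf1 : Differentiable ℝ f := hf.differentiable (by simp)
  have hu1 : ContDiff ℝ ∞ (uncurry (pdx u)) := hu.uncurry_pdx (by simp)
  have hu2 : ContDiff ℝ ∞ (uncurry (pdx (pdx u))) := hu1.uncurry_pdx (by simp)
  have hu3 : ContDiff ℝ ∞ (uncurry (pdx (pdx (pdx u)))) := hu2.uncurry_pdx (by simp)
  have hu4 : ContDiff ℝ ∞ (uncurry (pdx (pdx (pdx (pdx u))))) := hu3.uncurry_pdx (by simp)
  have d0 := hasDerivAt_pdx (hu.differentiable (by simp) (t, x))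
  have d1 := hasDerivAt_pdx (hu1.differentiable (by simp) (t, x))
  have d2 := hasDerivAt_pdx (hu2.differentiable (by simp) (t, x))
  have d3 := hasDerivAt_pdx (hu3.differentiable (by simp) (t, x))
  have d4 := hasDerivAt_pdx (hu4.differentiable (by simp) (t, x))
  have dfu := (hf1 (u t x)).hasDerivAt.comp x d0
  have df'u := (hf.differentiable_deriv_two (u t x)).hasDerivAt.comp x d0
  have hX : HasDerivAt (fun y => X1 f u t y) _ x :=
    ((((((((d4.mul d2).div (d1.pow 2) (pow_ne_zero 2 hne)).neg.add
      (((d3.pow 2).const_mul (1/2 : ℝ)).div (d1.pow 2) (pow_ne_zero 2 hne))).add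
      (((d3.const_mul (2/3 : ℝ)).mul (((d2.pow 2).const_mul 3).add dfu)).div
        (d1.pow 3) (pow_ne_zero 3 hne))).sub
      (((d2.pow 4).const_mul (9/8 : ℝ)).div (d1.pow 4) (pow_ne_zero 4 hne))).add
      ((((d2.pow 2).const_mul (1/2 : ℝ)).mul dfu).div (d1.pow 4) (pow_ne_zero 4 hne))).sub
      ((d2.mul df'u).div (d1.pow 2) (pow_ne_zero 2 hne))).add
      (((dfu.pow 2).const_mul (1/6 : ℝ)).div (d1.pow 4) (pow_ne_zero 4 hne)))
  -- `u_xt` is known on the whole line `{t} × ℝ`, so `u_xxt = ∂ₓ u_xt` comes from differentiating it.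
  have huxt : HasDerivAt (fun y => pdt (pdx u) t y) _ x :=
    ((((d4.sub (((d2.const_mul 3).mul d3).div d1 hne)).add
      (((d2.pow 3).const_mul (3/2 : ℝ)).div (d1.pow 2) (pow_ne_zero 2 hne))).add df'u).sub
      ((dfu.mul d2).div (d1.pow 2) (pow_ne_zero 2 hne))).congr_of_eventuallyEq
      (Eventually.of_forall fun y => hsol.pdt_pdx_eq (hf1 _) hu (hux y))
  have huxxt : pdt (pdx (pdx u)) t x = _ :=
    (pdt_pdx_comm (contDiff_infty.1 hu1 2) t x).trans huxt.deriv
  rw [pdt_T1_eq (hf1 _) hu hne, show pdx (X1 f u) t x = _ from hX.deriv, huxxt,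
    hsol.pdt_pdx_eq (hf1 _) hu hne, hsol t x]
  simp only [Pi.add_apply, Pi.mul_apply, Pi.pow_apply, comp_apply]
  field_simp
  ring

end GKN

theorem gKN_energy_constant_general (f : ℝ → ℝ) (hf : ContDiff ℝ (⊤ : ℕ∞) f)
    (u : ℝ → ℝ → ℝ) (hu : ContDiff ℝ (⊤ : ℕ∞) (Function.uncurry u))
    (hux : ∀ t x, pdx u t x ≠ 0)
    (hsol : isGKN f u)
    (hE : ∀ t : ℝ, HasDerivAt (fun s => ∫ x : ℝ, T1 f u s x) (∫ x : ℝ, pdt (T1 f u) t x) t)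
    (hXint : ∀ t : ℝ, Integrable (fun x => pdx (X1 f u) t x))
    (hXtop : ∀ t : ℝ, Tendsto (fun x => X1 f u t x) atTop (nhds 0))
    (hXbot : ∀ t : ℝ, Tendsto (fun x => X1 f u t x) atBot (nhds 0)) :
    ∀ t : ℝ, HasDerivAt (fun s => ∫ x : ℝ, T1 f u s x) 0 t := by
  intro t
  have hf2 : ContDiff ℝ 2 f := contDiff_infty.1 hf 2
  have hflux : ∫ x, pdx (X1 f u) t x = 0 := by
    simpa using integral_of_hasDerivAt_of_tendsto (f' := fun x => pdx (X1 f u) t x)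
      (fun x => (differentiable_X1 hf2 hu (hux t) x).hasDerivAt) (hXint t) (hXbot t) (hXtop t)
  have hdensity : ∫ x, pdt (T1 f u) t x = 0 := by
    simp_rw [hsol.pdt_T1_eq_neg_pdx_X1 hf2 hu (hux t), integral_neg, hflux, neg_zero]
  simpa [hdensity] using hE t

/-- Conservation of the Hamiltonian energy `E₁ = ∫ T₁ dx` for solutions of the
gKN equation with sufficient spatial decay. -/
theorem gKN_energy_constant (f : ℝ → ℝ) (hf : ContDiff ℝ (⊤ : ℕ∞) f)
    (u : ℝ → ℝ → ℝ) (hu : ContDiff ℝ (⊤ : ℕ∞) (Function.uncurry u))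
    (hux : ∀ t x, pdx u t x ≠ 0)
    (hsol : isGKN f u)
    (hTint : ∀ t : ℝ, Integrable (fun x => T1 f u t x))
    (hE : ∀ t : ℝ, HasDerivAt (fun s => ∫ x : ℝ, T1 f u s x) (∫ x : ℝ, pdt (T1 f u) t x) t)
    (hXint : ∀ t : ℝ, Integrable (fun x => pdx (X1 f u) t x))
    (hXtop : ∀ t : ℝ, Tendsto (fun x => X1 f u t x) atTop (nhds 0))
    (hXbot : ∀ t : ℝ, Tendsto (fun x => X1 f u t x) atBot (nhds 0)) :
    ∀ t : ℝ, HasDerivAt (fun s => ∫ x : ℝ, T1 f u s x) 0 t :=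
  gKN_energy_constant_general f hf u hu hux hsol hE hXint hXtop hXbot
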